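/- arXiv:1902.10492 — 2 statements merged into one kernel-verified Lean document; each statement's English description precedes it below -/
import Mathlib

section
/- Let (Ω, F, P) be a probability space, G ⊆ F a sub-σ-algebra, Q ≪ P with density y₁, and S a bounded nonnegative F-measurable random variable. If ∫_A y₁ S dP ≤ ∫_A E[y₁ | G] · Z dP for all A ∈ G, where Z is a bounded nonnegative G-measurable random variable, and if E_P[y₁ | G] > 0 P-a.s., then E_Q[S | G] ≤ Z Q-almost surely. -/
open MeasureTheory

/-- If `∫_A y₁ S dP ≤ ∫_A E[y₁|G]·Z dP` for all `A ∈ G`, where `Z` is bounded nonnegative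
`G`-measurable, and `E_P[y₁|G] > 0` `P`-a.s., then `E_Q[S|G] ≤ Z` `Q`-a.s. -/
theorem stmt6 {Ω : Type*} (G : MeasurableSpace Ω) {F : MeasurableSpace Ω} (P : Measure Ω) [IsProbabilityMeasure P]
    (Q : Measure Ω) [IsProbabilityMeasure Q]
    (hG : G ≤ F)
    (y₁ : Ω → ℝ) (hy₁m : Measurable y₁) (hy₁nn : ∀ ω, 0 ≤ y₁ ω) (hy₁int : Integrable y₁ P)
    (hQ : Q = P.withDensity fun ω => ENNReal.ofReal (y₁ ω))
    (S : Ω → ℝ) (hSm : Measurable S) (hSnn : ∀ ω, 0 ≤ S ω) (hSbd : ∃ C : ℝ, ∀ ω, |S ω| ≤ C)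
    (Z : Ω → ℝ) (hZm : Measurable[G] Z) (hZnn : ∀ ω, 0 ≤ Z ω) (hZbd : ∃ C : ℝ, ∀ ω, |Z ω| ≤ C)
    (hpos : ∀ᵐ ω ∂P, 0 < (P[y₁|G]) ω)
    (hineq : ∀ A : Set Ω, MeasurableSet[G] A →
      ∫ ω in A, y₁ ω * S ω ∂P ≤ ∫ ω in A, (P[y₁|G]) ω * Z ω ∂P) :
    ∀ᵐ ω ∂Q, (Q[S|G]) ω ≤ Z ω := by
  obtain ⟨CS, hCS⟩ := hSbd
  obtain ⟨CZ, hCZ⟩ := hZbd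
  have hZm' : Measurable[F] Z := hZm.mono hG le_rfl
  have hSmF : Measurable[F] S := hSm
  have hy₁mF : Measurable[F] y₁ := hy₁m
  -- integrability of S and Z w.r.t. Q
  have hSint : Integrable S Q :=
    (integrable_const CS).mono' (hSmF.aestronglyMeasurable (μ := Q))
      (Filter.Eventually.of_forall fun ω => by simpa using hCS ω)
  have hZint : Integrable Z Q :=
    (integrable_const CZ).mono' (hZm'.aestronglyMeasurable (μ := Q))
      (Filter.Eventually.of_forall fun ω => by simpa using hCZ ω)
  -- change of measure for set integrals
  have hchg : ∀ (g : Ω → ℝ) (A : Set Ω), MeasurableSet[F] A →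
      ∫ ω in A, g ω ∂Q = ∫ ω in A, y₁ ω * g ω ∂P := by
    intro g A hA
    have h1 : (fun ω => ENNReal.ofReal (y₁ ω)) = fun ω => ((y₁ ω).toNNReal : ENNReal) := rfl
    rw [hQ, h1, @setIntegral_withDensity_eq_setIntegral_smul Ω ℝ F P _ _ _ hy₁mF.real_toNNReal g A hA]
    refine @setIntegral_congr_fun Ω ℝ F _ _ _ _ A P hA fun ω _ => ?_
    simp [NNReal.smul_def, Real.coe_toNNReal _ (hy₁nn ω)]
  -- pull-out property for Z : ∫_A y₁ Z dP = ∫_A E[y₁|G] Z dP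
  have hZy₁int : Integrable (fun ω => Z ω * y₁ ω) P :=
    hy₁int.bdd_mul (hZm'.aestronglyMeasurable (μ := P)) (Filter.Eventually.of_forall fun ω => by simpa using hCZ ω)
  have hpull : (P[fun ω => Z ω * y₁ ω|G]) =ᵐ[P] fun ω => Z ω * (P[y₁|G]) ω :=
    condExp_mul_of_stronglyMeasurable_left (hZm.stronglyMeasurable) hZy₁int hy₁int
  -- the key set-integral inequality over Q
  have key : ∀ A : Set Ω, MeasurableSet[G] A →
      ∫ ω in A, (Q[S|G]) ω ∂Q ≤ ∫ ω in A, Z ω ∂Q := by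
    intro A hA
    have hAF : MeasurableSet[F] A := hG A hA
    have h1 : ∫ ω in A, (Q[S|G]) ω ∂Q = ∫ ω in A, S ω ∂Q := setIntegral_condExp hG hSint hA
    have h2 : ∫ ω in A, S ω ∂Q = ∫ ω in A, y₁ ω * S ω ∂P := hchg S A hAF
    have h3 : ∫ ω in A, Z ω ∂Q = ∫ ω in A, y₁ ω * Z ω ∂P := hchg Z A hAF
    have h4 : ∫ ω in A, y₁ ω * Z ω ∂P = ∫ ω in A, (P[y₁|G]) ω * Z ω ∂P := by
      calc ∫ ω in A, y₁ ω * Z ω ∂P = ∫ ω in A, Z ω * y₁ ω ∂P := by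
            simp_rw [mul_comm]
        _ = ∫ ω in A, (P[fun ω => Z ω * y₁ ω|G]) ω ∂P :=
            (setIntegral_condExp hG hZy₁int hA).symm
        _ = ∫ ω in A, Z ω * (P[y₁|G]) ω ∂P :=
            @setIntegral_congr_ae Ω ℝ F _ _ _ _ A P hAF (hpull.mono fun ω h _ => h)
        _ = ∫ ω in A, (P[y₁|G]) ω * Z ω ∂P := by simp_rw [mul_comm]
    rw [h1, h2, h3, h4]
    exact hineq A hA
  -- conclude via trimmed measure
  have hcm : StronglyMeasurable[G] (Q[S|G]) := stronglyMeasurable_condExp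
  have hZsm : StronglyMeasurable[G] Z := hZm.stronglyMeasurable
  have hcint : Integrable (Q[S|G]) Q := integrable_condExp
  have htrim : (Q[S|G]) ≤ᵐ[Q.trim hG] Z := by
    refine ae_le_of_forall_setIntegral_le (hcint.trim hG hcm) (hZint.trim hG hZsm)
      fun s hs _ => ?_
    rw [← setIntegral_trim hG hcm hs, ← setIntegral_trim hG hZsm hs]
    exact key s hs
  exact ae_of_ae_trim hG htrim
end

section
/- In a discrete-time market on (Ω, F, P) with filtration (G_t)_{t=0}^T, if Q is a probability measure absolutely continuous with respect to P under which the discounted price process of every asset satisfies E_Q[S_j(T) | G_0] ≤ S_j(0) (where G_0 is trivial) and S₀ ≡ 1, and B ≥ 0 is a claim that is super-replicable by a nonnegative self-financing (G_t)-adapted strategy H with initial cost v (i.e., S(T)·H(T-1) ≥ B a.s., S(t)·ΔH(t) = 0 for 1 ≤ t ≤ T-1, H(t) ≥ 0 componentwise, S(0)·H(0) ≤ v), and Q is a mixed conditional super-martingale measure in the sense E_Q[S_j(t+1)|G_t] ≤ E_Q[S_j(t)|G_t] for all assets j and all t, then E_Q[B] ≤ v (weak duality). -/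
/-!
Against a `G t`-measurable nonnegative weight, the conditional super-martingale inequality
`E_Q[S(t+1) | G t] ≤ E_Q[S(t) | G t]` integrates to `E_Q[S(t+1)·H(t)] ≤ E_Q[S(t)·H(t)]`; these
expectations are taken in `[0, ∞]`, since nothing makes the holdings `H` integrable.
Self-financing turns `S(t)·H(t)` into `S(t)·H(t-1)`, so the expected value of the portfolio
decreases along `t`, and `E_Q[B] ≤ E_Q[S(T)·H(T-1)] ≤ E_Q[S(0)·H(0)] ≤ v`.
-/

open MeasureTheory Finset
open scoped ENNReal

section CondExpPairing

variable {Ω : Type*} {m m₀ : MeasurableSpace Ω} {μ : Measure Ω} {f g : Ω → ℝ}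

theorem setLIntegral_ofReal_le_of_condExp_le (hm : m ≤ m₀) [SigmaFinite (μ.trim hm)]
    (hf : Integrable f μ) (hg : Integrable g μ) (hf0 : 0 ≤ᵐ[μ] f) (hg0 : 0 ≤ᵐ[μ] g)
    (hfg : μ[f|m] ≤ᵐ[μ] μ[g|m]) {s : Set Ω} (hs : MeasurableSet[m] s) :
    ∫⁻ ω in s, ENNReal.ofReal (f ω) ∂μ ≤
      ∫⁻ ω in s, ENNReal.ofReal (g ω) ∂μ := by
  rw [← ofReal_integral_eq_lintegral_ofReal hf.restrict (ae_restrict_of_ae hf0),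
    ← ofReal_integral_eq_lintegral_ofReal hg.restrict (ae_restrict_of_ae hg0),
    ← setIntegral_condExp hm hf hs, ← setIntegral_condExp hm hg hs]
  exact ENNReal.ofReal_le_ofReal
    (setIntegral_mono_ae integrable_condExp.restrict integrable_condExp.restrict hfg)

theorem trim_withDensity_ofReal_le_of_condExp_le (hm : m ≤ m₀) [SigmaFinite (μ.trim hm)]
    (hf : Integrable f μ) (hg : Integrable g μ) (hf0 : 0 ≤ᵐ[μ] f) (hg0 : 0 ≤ᵐ[μ] g)
    (hfg : μ[f|m] ≤ᵐ[μ] μ[g|m]) :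
    (μ.withDensity fun ω => ENNReal.ofReal (f ω)).trim hm ≤
      (μ.withDensity fun ω => ENNReal.ofReal (g ω)).trim hm := by
  refine Measure.le_iff.2 fun s hs => ?_
  rw [trim_measurableSet_eq hm hs, trim_measurableSet_eq hm hs,
    withDensity_apply _ (hm s hs), withDensity_apply _ (hm s hs)]
  exact setLIntegral_ofReal_le_of_condExp_le hm hf hg hf0 hg0 hfg hs

theorem lintegral_ofReal_mul_le_of_condExp_le (hm : m ≤ m₀) [SigmaFinite (μ.trim hm)]
    (hf : Integrable f μ) (hg : Integrable g μ) (hf0 : 0 ≤ᵐ[μ] f) (hg0 : 0 ≤ᵐ[μ] g)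
    (hfg : μ[f|m] ≤ᵐ[μ] μ[g|m]) {w : Ω → ℝ≥0∞} (hw : Measurable[m] w) :
    ∫⁻ ω, ENNReal.ofReal (f ω) * w ω ∂μ ≤
      ∫⁻ ω, ENNReal.ofReal (g ω) * w ω ∂μ := by
  have trim_withDensity : ∀ {u : Ω → ℝ}, Integrable u μ →
      ∫⁻ ω, w ω ∂(μ.withDensity fun ω => ENNReal.ofReal (u ω)).trim hm =
        ∫⁻ ω, ENNReal.ofReal (u ω) * w ω ∂μ := fun hu => by
    rw [lintegral_trim hm hw, lintegral_withDensity_eq_lintegral_mul₀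
      hu.1.aemeasurable.ennreal_ofReal (hw.mono hm le_rfl).aemeasurable]
    rfl
  rw [← trim_withDensity hf, ← trim_withDensity hg]
  exact lintegral_mono' (trim_withDensity_ofReal_le_of_condExp_le hm hf hg hf0 hg0 hfg)
    le_rfl

end CondExpPairing

section PortfolioValue

variable {Ω ι : Type*} [Fintype ι] {m m₀ : MeasurableSpace Ω} {μ : Measure Ω}
  {x y w : Ω → ι → ℝ}

theorem lintegral_ofReal_sum_mul (hx : ∀ i, AEMeasurable (fun ω => x ω i) μ)
    (hw : ∀ i, AEMeasurable (fun ω => w ω i) μ) (hx0 : ∀ ω i, 0 ≤ x ω i)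
    (hw0 : ∀ ω i, 0 ≤ w ω i) :
    ∫⁻ ω, ENNReal.ofReal (∑ i, x ω i * w ω i) ∂μ =
      ∑ i, ∫⁻ ω, ENNReal.ofReal (x ω i) * ENNReal.ofReal (w ω i) ∂μ := by
  rw [← lintegral_finsetSum' (f := fun i ω => ENNReal.ofReal (x ω i) * ENNReal.ofReal (w ω i))
    _ fun i _ => (hx i).ennreal_ofReal.mul (hw i).ennreal_ofReal]
  refine lintegral_congr fun ω => ?_
  rw [ENNReal.ofReal_sum_of_nonneg fun i _ => mul_nonneg (hx0 ω i) (hw0 ω i)]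
  exact sum_congr rfl fun i _ => ENNReal.ofReal_mul (hx0 ω i)

theorem lintegral_ofReal_sum_mul_le_of_condExp_le (hm : m ≤ m₀) [SigmaFinite (μ.trim hm)]
    (hx : ∀ i, Integrable (fun ω => x ω i) μ) (hy : ∀ i, Integrable (fun ω => y ω i) μ)
    (hx0 : ∀ ω i, 0 ≤ x ω i) (hy0 : ∀ ω i, 0 ≤ y ω i)
    (hxy : ∀ i, μ[fun ω => x ω i|m] ≤ᵐ[μ] μ[fun ω => y ω i|m])
    (hw : ∀ i, Measurable[m] fun ω => w ω i) (hw0 : ∀ ω i, 0 ≤ w ω i) :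
    ∫⁻ ω, ENNReal.ofReal (∑ i, x ω i * w ω i) ∂μ ≤
      ∫⁻ ω, ENNReal.ofReal (∑ i, y ω i * w ω i) ∂μ := by
  have hw' : ∀ i, AEMeasurable (fun ω => w ω i) μ :=
    fun i => ((hw i).mono hm le_rfl).aemeasurable
  rw [lintegral_ofReal_sum_mul (fun i => (hx i).1.aemeasurable) hw' hx0 hw0,
    lintegral_ofReal_sum_mul (fun i => (hy i).1.aemeasurable) hw' hy0 hw0]
  exact sum_le_sum fun i _ => lintegral_ofReal_mul_le_of_condExp_le hm (hx i) (hy i)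
    (.of_forall fun ω => hx0 ω i) (.of_forall fun ω => hy0 ω i) (hxy i) (hw i).ennreal_ofReal

end PortfolioValue

theorem stmt13_general {Ω : Type*} {F : MeasurableSpace Ω} (P Q : Measure Ω)
    [IsProbabilityMeasure Q] (hQP : Q ≪ P)
    (T N : ℕ) (hT : 1 ≤ T)
    (G : ℕ → MeasurableSpace Ω) (hGF : ∀ t, G t ≤ F)
    (S : ℕ → Ω → Fin (N + 1) → ℝ)
    (hSnn : ∀ t ω j, 0 ≤ S t ω j)
    (hSint : ∀ t j, Integrable (fun ω => S t ω j) Q)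
    (hsuper : ∀ (j : Fin (N + 1)) (t : ℕ), t < T →
      ∀ᵐ ω ∂Q, (Q[fun ω => S (t + 1) ω j|G t]) ω ≤ (Q[fun ω => S t ω j|G t]) ω)
    (B : Ω → ℝ) (hBnn : ∀ ω, 0 ≤ B ω) (hBint : Integrable B Q)
    (v : ℝ) (H : ℕ → Ω → Fin (N + 1) → ℝ)
    (hHadapt : ∀ t j, t ≤ T - 1 → Measurable[G t] fun ω => H t ω j)
    (hHnn : ∀ t ω j, 0 ≤ H t ω j)
    (hsf : ∀ t, 1 ≤ t → t ≤ T - 1 →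
      ∀ᵐ ω ∂P, ∑ i, S t ω i * (H t ω i - H (t - 1) ω i) = 0)
    (hrepl : ∀ᵐ ω ∂P, B ω ≤ ∑ i, S T ω i * H (T - 1) ω i)
    (hcost : ∀ ω, ∑ i, S 0 ω i * H 0 ω i ≤ v) :
    ∫ ω, B ω ∂Q ≤ v := by
  set V : ℕ → ℕ → ℝ≥0∞ := fun t s =>
    ∫⁻ ω, ENNReal.ofReal (∑ i, S t ω i * H s ω i) ∂Q
  have holding : ∀ t ≤ T - 1, V (t + 1) t ≤ V t t := fun t ht =>
    lintegral_ofReal_sum_mul_le_of_condExp_le (hGF t) (hSint (t + 1)) (hSint t)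
      (hSnn (t + 1)) (hSnn t) (fun j => hsuper j t (by omega)) (fun j => hHadapt t j ht)
      (hHnn t)
  have rebalance : ∀ t, 1 ≤ t → t ≤ T - 1 → V t t = V t (t - 1) := fun t h1 ht =>
    lintegral_congr_ae <| ((hsf t h1 ht).filter_mono hQP.ae_le).mono fun ω hω => by
      simp only [mul_sub, sum_sub_distrib, sub_eq_zero] at hω
      simp only [hω]
  have decreasing : ∀ t ≤ T - 1, V (t + 1) t ≤ V 0 0 := by
    intro t ht
    induction t with
    | zero => exact holding 0 ht
    | succ t ih => calc
        V (t + 2) (t + 1) ≤ V (t + 1) (t + 1) := holding (t + 1) ht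
        _ = V (t + 1) t := rebalance (t + 1) (by omega) ht
        _ ≤ V 0 0 := ih (by omega)
  have hB : ∫⁻ ω, ENNReal.ofReal (B ω) ∂Q ≤ ENNReal.ofReal v := calc
    ∫⁻ ω, ENNReal.ofReal (B ω) ∂Q ≤ V (T - 1 + 1) (T - 1) := by
      rw [Nat.sub_add_cancel hT]
      exact lintegral_mono_ae <|
        (hrepl.filter_mono hQP.ae_le).mono fun ω hω => ENNReal.ofReal_le_ofReal hω
    _ ≤ V 0 0 := decreasing (T - 1) le_rfl
    _ ≤ ∫⁻ _, ENNReal.ofReal v ∂Q :=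
      lintegral_mono fun ω => ENNReal.ofReal_le_ofReal (hcost ω)
    _ = ENNReal.ofReal v := by simp
  obtain ⟨ω₀⟩ := nonempty_of_isProbabilityMeasure Q
  have hv : 0 ≤ v :=
    (sum_nonneg fun i _ => mul_nonneg (hSnn 0 ω₀ i) (hHnn 0 ω₀ i)).trans (hcost ω₀)
  rw [integral_eq_lintegral_of_nonneg_ae (.of_forall hBnn) hBint.1]
  exact ENNReal.toReal_le_of_le_ofReal hv hB

/-- Weak duality: if `Q ≪ P` is a mixed conditional super-martingale measure for the
discounted prices with respect to the information filtration `(G_t)` (with `G_0` trivial,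
`G_T = F`), and the claim `B ≥ 0` is super-replicated with initial cost `v` by a nonnegative
self-financing `(G_t)`-adapted strategy `H`, then `E_Q[B] ≤ v`. -/
theorem stmt13 {Ω : Type*} {F : MeasurableSpace Ω} (P Q : Measure Ω)
    [IsProbabilityMeasure P] [IsProbabilityMeasure Q] (hQP : Q ≪ P)
    (T N : ℕ) (hT : 1 ≤ T)
    (G : ℕ → MeasurableSpace Ω) (hmono : Monotone G) (hGF : ∀ t, G t ≤ F)
    (hG0 : G 0 = ⊥) (hGT : G T = F)
    (S : ℕ → Ω → Fin (N + 1) → ℝ)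
    (hSnn : ∀ t ω j, 0 ≤ S t ω j)
    (hbond : ∀ t ω, S t ω 0 = 1)
    (hSadapt : ∀ t j, Measurable fun ω => S t ω j)
    (hSint : ∀ t j, Integrable (fun ω => S t ω j) Q)
    (hsuper : ∀ (j : Fin (N + 1)) (t : ℕ), t < T →
      ∀ᵐ ω ∂Q, (Q[fun ω => S (t + 1) ω j|G t]) ω ≤ (Q[fun ω => S t ω j|G t]) ω)
    (hinit : ∀ j : Fin (N + 1), ∀ᵐ ω ∂Q, (Q[fun ω => S T ω j|G 0]) ω ≤ S 0 ω j)
    (B : Ω → ℝ) (hBnn : ∀ ω, 0 ≤ B ω) (hBmeas : Measurable B) (hBint : Integrable B Q)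
    (v : ℝ) (H : ℕ → Ω → Fin (N + 1) → ℝ)
    (hHadapt : ∀ t j, t ≤ T - 1 → Measurable[G t] fun ω => H t ω j)
    (hHnn : ∀ t ω j, 0 ≤ H t ω j)
    (hsf : ∀ t, 1 ≤ t → t ≤ T - 1 →
      ∀ᵐ ω ∂P, ∑ i, S t ω i * (H t ω i - H (t - 1) ω i) = 0)
    (hrepl : ∀ᵐ ω ∂P, B ω ≤ ∑ i, S T ω i * H (T - 1) ω i)
    (hcost : ∀ ω, ∑ i, S 0 ω i * H 0 ω i ≤ v) :
    ∫ ω, B ω ∂Q ≤ v :=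
  stmt13_general P Q hQP T N hT G hGF S hSnn hSint hsuper B hBnn hBint v H hHadapt hHnn hsf hrepl
    hcost
end
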